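/- arXiv:2107.11729 — 4 statements merged into one kernel-verified Lean document; each statement's English description precedes it below -/
import Mathlib

section
/- If the signed graph is structurally balanced with gauge σ and the unsigned graph |A| is connected, then the kernel of the signed Laplacian L is one-dimensional, spanned by the vector (σ(1), …, σ(n)). -/
open Finset Matrix

noncomputable def signedLaplacian {n : ℕ} (A : Matrix (Fin n) (Fin n) ℝ) :
    Matrix (Fin n) (Fin n) ℝ :=
  Matrix.of fun i k => if i = k then ∑ j ∈ Finset.univ.erase i, |A i j| else -A i k

/-- For a structurally balanced, connected signed graph, the kernel of the signed
Laplacian is one-dimensional, spanned by the gauge vector σ. -/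
theorem signedLaplacian_kernel_span {n : ℕ} (A : Matrix (Fin n) (Fin n) ℝ)
    (hsym : A.IsSymm) (hdiag : ∀ i, A i i = 0)
    (σ : Fin n → ℝ) (hσ : ∀ i, σ i = 1 ∨ σ i = -1)
    (hbal : ∀ i j, i ≠ j → σ i * σ j * A i j = |A i j|)
    (hconn : ∀ i j : Fin n, Relation.ReflTransGen (fun a b => A a b ≠ 0) i j) :
    ∀ x : Fin n → ℝ, signedLaplacian A *ᵥ x = 0 ↔ ∃ c : ℝ, x = c • σ := by
  have hσ2 : ∀ i, σ i * σ i = 1 := by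
    intro i; rcases hσ i with h | h <;> rw [h] <;> norm_num
  have hkey : ∀ i k, A i k * σ k = σ i * |A i k| := by
    intro i k
    by_cases h : i = k
    · subst h; simp [hdiag]
    · have h1 := hbal i k h
      have h2 := hσ2 i
      linear_combination σ i * h1 - σ k * A i k * h2
  -- σ i * A i k = σ k * |A i k|
  have hkey' : ∀ i k, σ i * A i k = σ k * |A i k| := by
    intro i k
    have h1 := hkey i k
    have h2 := hσ2 i
    have h3 := hσ2 k
    linear_combination σ i * σ k * h1 + σ k * |A i k| * h2 - σ i * A i k * h3
  have hLx : ∀ (x : Fin n → ℝ) (i : Fin n), (signedLaplacian A *ᵥ x) i =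
      (∑ j ∈ univ.erase i, |A i j|) * x i + ∑ k ∈ univ.erase i, (-A i k) * x k := by
    intro x i
    have : (signedLaplacian A *ᵥ x) i = ∑ k, (signedLaplacian A) i k * x k := rfl
    rw [this, ← Finset.add_sum_erase _ _ (mem_univ i)]
    congr 1
    · simp [signedLaplacian]
    · apply Finset.sum_congr rfl
      intro k hk
      have : i ≠ k := fun h => (Finset.ne_of_mem_erase hk) h.symm
      simp [signedLaplacian, this]
  intro x
  constructor
  · intro hx
    set y : Fin n → ℝ := fun i => σ i * x i with hy
    have heq : ∀ i, ∑ k ∈ univ.erase i, |A i k| * (y i - y k) = 0 := by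
      intro i
      have h0 : (signedLaplacian A *ᵥ x) i = 0 := by rw [hx]; rfl
      rw [hLx] at h0
      have h0' : σ i * ((∑ j ∈ univ.erase i, |A i j|) * x i
          + ∑ k ∈ univ.erase i, (-A i k) * x k) = 0 := by rw [h0]; ring
      have hterm : ∀ k ∈ univ.erase i, σ i * ((-A i k) * x k) = -(|A i k| * y k) := by
        intro k _
        have := hkey' i k
        simp only [hy]
        linear_combination (-x k) * this
      have hsum : ∑ k ∈ univ.erase i, σ i * ((-A i k) * x k)
          = -∑ k ∈ univ.erase i, |A i k| * y k := by
        rw [Finset.sum_congr rfl hterm, Finset.sum_neg_distrib]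
      calc ∑ k ∈ univ.erase i, |A i k| * (y i - y k)
          = (∑ j ∈ univ.erase i, |A i j|) * y i - ∑ k ∈ univ.erase i, |A i k| * y k := by
            simp only [mul_sub]; rw [Finset.sum_sub_distrib, ← Finset.sum_mul]
        _ = 0 := by
            rw [mul_add, Finset.mul_sum, hsum] at h0'
            simp only [hy] at h0' ⊢
            linear_combination h0'
    rcases Nat.eq_zero_or_pos n with hn | hn
    · subst hn; exact ⟨0, funext fun i => i.elim0⟩
    · have hne : (univ : Finset (Fin n)).Nonempty := ⟨⟨0, hn⟩, mem_univ _⟩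
      obtain ⟨m, -, hm⟩ := Finset.exists_max_image univ y hne
      have hconst : ∀ j, y j = y m := by
        intro j
        induction hconn m j with
        | refl => rfl
        | tail hab hbc ih =>
          rename_i b c
          have hb : y b = y m := ih
          have hnonneg : ∀ k ∈ univ.erase b, 0 ≤ |A b k| * (y b - y k) := by
            intro k _
            apply mul_nonneg (abs_nonneg _)
            rw [sub_nonneg, hb]
            exact hm k (mem_univ k)
          have hall := (Finset.sum_eq_zero_iff_of_nonneg hnonneg).mp (heq b)
          have hcb : c ≠ b := by
            intro h; exact hbc (by rw [h]; exact hdiag b)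
          have hc := hall c (Finset.mem_erase.mpr ⟨hcb, mem_univ c⟩)
          have habs : |A b c| ≠ 0 := abs_ne_zero.mpr hbc
          have : y b - y c = 0 := by
            rcases mul_eq_zero.mp hc with h | h
            · exact absurd h habs
            · exact h
          linarith [hb]
      refine ⟨y m, funext fun i => ?_⟩
      have : σ i * x i = y m := hconst i
      have h2 := hσ2 i
      simp only [Pi.smul_apply, smul_eq_mul]
      linear_combination σ i * this - x i * h2
  · rintro ⟨c, rfl⟩
    funext i
    rw [hLx]
    simp only [Pi.smul_apply, smul_eq_mul, Pi.zero_apply]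
    have : ∑ k ∈ univ.erase i, (-A i k) * (c * σ k)
        = -(c * σ i * ∑ k ∈ univ.erase i, |A i k|) := by
      rw [Finset.mul_sum, ← Finset.sum_neg_distrib]
      apply Finset.sum_congr rfl
      intro k _
      have := hkey i k
      linear_combination (-c) * this
    rw [this]; ring
end

section
/- For the dynamics ẋ = -Lx with L a signed Laplacian that is structurally balanced with gauge σ and connected underlying graph, every solution converges to β·σ, where β = (1/n) Σ_i σ(i) x_i(0). In particular |x_i(t)| → |β| for every i (bipartite consensus). -/
open Finset Matrix

section aux

variable {n : ℕ} {A : Matrix (Fin n) (Fin n) ℝ} {σ : Fin n → ℝ}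

lemma sL_mulVec (hdiag : ∀ i, A i i = 0)
    (hσ : ∀ i, σ i = 1 ∨ σ i = -1)
    (hbal : ∀ i j, i ≠ j → σ i * σ j * A i j = |A i j|)
    (v : Fin n → ℝ) (i : Fin n) :
    (signedLaplacian A *ᵥ v) i = ∑ j, |A i j| * (v i - σ i * σ j * v j) := by
  have hsq : ∀ i, σ i * σ i = 1 := fun i => by rcases hσ i with h | h <;> rw [h] <;> ring
  have hA' : ∀ i j, A i j = σ i * σ j * |A i j| := by
    intro i j
    by_cases h : i = j
    · subst h; simp [hdiag i]
    · calc A i j = (σ i * σ i) * (σ j * σ j) * A i j := by rw [hsq i, hsq j]; ring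
        _ = σ i * σ j * (σ i * σ j * A i j) := by ring
        _ = σ i * σ j * |A i j| := by rw [hbal i j h]
  have habsii : |A i i| = 0 := by rw [hdiag i]; simp
  have : (signedLaplacian A *ᵥ v) i = ∑ k, (signedLaplacian A) i k * v k := rfl
  rw [this, ← Finset.add_sum_erase _ _ (Finset.mem_univ i)]
  have hdii : signedLaplacian A i i = ∑ j ∈ Finset.univ.erase i, |A i j| := by
    simp [signedLaplacian]
  have h1 : (signedLaplacian A) i i * v i = ∑ j, |A i j| * v i := by
    rw [hdii, Finset.sum_mul,
      ← Finset.add_sum_erase Finset.univ (fun j => |A i j| * v i) (Finset.mem_univ i), habsii]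
    ring
  have h2 : ∑ k ∈ Finset.univ.erase i, (signedLaplacian A) i k * v k
      = ∑ j, -(|A i j| * (σ i * σ j * v j)) := by
    rw [← Finset.add_sum_erase Finset.univ (fun j => -(|A i j| * (σ i * σ j * v j)))
      (Finset.mem_univ i), habsii]
    rw [show -(0 * (σ i * σ i * v i)) = 0 by ring, zero_add]
    refine Finset.sum_congr rfl fun k hk => ?_
    have hik : i ≠ k := fun h => (Finset.mem_erase.mp hk).1 h.symm
    have hne : signedLaplacian A i k = -A i k := by simp [signedLaplacian, hik]
    rw [hne]
    linear_combination (-(σ i * σ k * v k)) * hbal i k hik + (A i k * v k) * hsq i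
      + (A i k * v k * (σ i * σ i)) * hsq k
  rw [h1, h2, ← Finset.sum_add_distrib]
  exact Finset.sum_congr rfl fun j _ => by ring

lemma sL_quad (hsym : A.IsSymm) (hdiag : ∀ i, A i i = 0)
    (hσ : ∀ i, σ i = 1 ∨ σ i = -1)
    (hbal : ∀ i j, i ≠ j → σ i * σ j * A i j = |A i j|)
    (v : Fin n → ℝ) :
    v ⬝ᵥ (signedLaplacian A *ᵥ v)
      = (∑ i, ∑ j, |A i j| * (σ i * v i - σ j * v j) ^ 2) / 2 := by
  have hsq : ∀ i, σ i * σ i = 1 := fun i => by rcases hσ i with h | h <;> rw [h] <;> ring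
  have habs : ∀ i j, |A j i| = |A i j| := fun i j => by rw [hsym.apply]
  set w : Fin n → ℝ := fun i => σ i * v i with hw
  have hlhs : v ⬝ᵥ (signedLaplacian A *ᵥ v)
      = ∑ i, ∑ j, (|A i j| * w i ^ 2 - |A i j| * (w i * w j)) := by
    unfold dotProduct
    refine Finset.sum_congr rfl fun i _ => ?_
    rw [sL_mulVec hdiag hσ hbal, Finset.mul_sum]
    refine Finset.sum_congr rfl fun j _ => ?_
    have : v i * (|A i j| * (v i - σ i * σ j * v j))
        = |A i j| * (v i * v i) - |A i j| * (σ i * σ j * (v i * v j)) := by ring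
    rw [this, hw]
    have h1 : v i * v i = (σ i * v i) ^ 2 := by
      have := hsq i; nlinarith [hsq i]
    have h2 : σ i * σ j * (v i * v j) = (σ i * v i) * (σ j * v j) := by ring
    rw [h1, h2]
  have hswap : ∑ i, ∑ j, |A i j| * w j ^ 2 = ∑ i, ∑ j, |A i j| * w i ^ 2 := by
    rw [Finset.sum_comm]
    exact Finset.sum_congr rfl fun j _ => Finset.sum_congr rfl fun i _ => by rw [habs]
  have hexp : ∑ i, ∑ j, |A i j| * (σ i * v i - σ j * v j) ^ 2
      = ∑ i, ∑ j, (|A i j| * w i ^ 2 + |A i j| * w j ^ 2 - 2 * (|A i j| * (w i * w j))) :=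
    Finset.sum_congr rfl fun i _ => Finset.sum_congr rfl fun j _ => by rw [hw]; ring
  have h2 : ∑ i, ∑ j, (2 : ℝ) * (|A i j| * (w i * w j))
      = 2 * ∑ i, ∑ j, |A i j| * (w i * w j) := by
    rw [Finset.mul_sum]
    exact Finset.sum_congr rfl fun i _ => by rw [Finset.mul_sum]
  simp only [Finset.sum_sub_distrib, Finset.sum_add_distrib] at hlhs hexp h2 ⊢
  rw [hexp, hswap, h2]
  linarith [hlhs]

end aux
section aux2

variable {n : ℕ} {A : Matrix (Fin n) (Fin n) ℝ} {σ : Fin n → ℝ}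

lemma sL_isHermitian (hsym : A.IsSymm) : (signedLaplacian A).IsHermitian := by
  ext i j
  simp only [Matrix.conjTranspose_apply, star_trivial]
  by_cases h : i = j
  · subst h; rfl
  · simp only [signedLaplacian, Matrix.of_apply, if_neg h, if_neg (Ne.symm h)]
    rw [hsym.apply]

lemma sL_mulVec_sigma (hdiag : ∀ i, A i i = 0)
    (hσ : ∀ i, σ i = 1 ∨ σ i = -1)
    (hbal : ∀ i j, i ≠ j → σ i * σ j * A i j = |A i j|) :
    signedLaplacian A *ᵥ σ = 0 := by
  have hsq : ∀ i, σ i * σ i = 1 := fun i => by rcases hσ i with h | h <;> rw [h] <;> ring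
  funext i
  rw [sL_mulVec hdiag hσ hbal σ i]
  simp only [Pi.zero_apply]
  refine Finset.sum_eq_zero fun j _ => ?_
  have : σ i - σ i * σ j * σ j = σ i * (1 - σ j * σ j) := by ring
  rw [this, hsq j]
  ring

lemma sL_posSemidef (hsym : A.IsSymm) (hdiag : ∀ i, A i i = 0)
    (hσ : ∀ i, σ i = 1 ∨ σ i = -1)
    (hbal : ∀ i j, i ≠ j → σ i * σ j * A i j = |A i j|) :
    (signedLaplacian A).PosSemidef := by
  refine Matrix.PosSemidef.of_dotProduct_mulVec_nonneg (sL_isHermitian hsym) fun v => ?_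
  rw [show star v = v from star_trivial v, sL_quad hsym hdiag hσ hbal v]
  refine div_nonneg (Finset.sum_nonneg fun i _ => Finset.sum_nonneg fun j _ => ?_) (by norm_num)
  positivity

lemma sL_kernel (hsym : A.IsSymm) (hdiag : ∀ i, A i i = 0)
    (hσ : ∀ i, σ i = 1 ∨ σ i = -1)
    (hbal : ∀ i j, i ≠ j → σ i * σ j * A i j = |A i j|)
    (hconn : ∀ i j : Fin n, Relation.ReflTransGen (fun a b => A a b ≠ 0) i j)
    (v : Fin n → ℝ) (hv : signedLaplacian A *ᵥ v = 0) (i j : Fin n) :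
    σ i * v i = σ j * v j := by
  have hquad : (∑ i, ∑ j, |A i j| * (σ i * v i - σ j * v j) ^ 2) / 2 = 0 := by
    rw [← sL_quad hsym hdiag hσ hbal v, hv, dotProduct_zero]
  have hsum : ∑ i, ∑ j, |A i j| * (σ i * v i - σ j * v j) ^ 2 = 0 := by linarith
  have hterm : ∀ a ∈ Finset.univ, ∀ b ∈ Finset.univ,
      |A a b| * (σ a * v a - σ b * v b) ^ 2 = 0 := by
    have h1 := (Finset.sum_eq_zero_iff_of_nonneg (fun a _ =>
      Finset.sum_nonneg fun b _ => by positivity)).mp hsum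
    intro a ha b hb
    exact (Finset.sum_eq_zero_iff_of_nonneg (fun b _ => by positivity)).mp (h1 a ha) b hb
  have hedge : ∀ a b : Fin n, A a b ≠ 0 → σ a * v a = σ b * v b := by
    intro a b hab
    have := hterm a (Finset.mem_univ a) b (Finset.mem_univ b)
    rcases mul_eq_zero.mp this with h | h
    · exact absurd (abs_eq_zero.mp h) hab
    · have := pow_eq_zero_iff (n := 2) (by norm_num) |>.mp h
      linarith [sub_eq_zero.mp this]
  have key : ∀ a b : Fin n, Relation.ReflTransGen (fun a b => A a b ≠ 0) a b →
      σ a * v a = σ b * v b := by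
    intro a b h
    induction h with
    | refl => rfl
    | tail _ hbc ih => exact ih.trans (hedge _ _ hbc)
  exact key i j (hconn i j)

end aux2
/-- Bipartite consensus: for structurally balanced connected signed Laplacian dynamics
ẋ = -Lx, every solution converges to β·σ with β = (1/n) ∑ σ(i) x_i(0); in particular
|x_i(t)| → |β| for each i. -/
theorem bipartite_consensus {n : ℕ} (A : Matrix (Fin n) (Fin n) ℝ)
    (hsym : A.IsSymm) (hdiag : ∀ i, A i i = 0)
    (σ : Fin n → ℝ) (hσ : ∀ i, σ i = 1 ∨ σ i = -1)
    (hbal : ∀ i j, i ≠ j → σ i * σ j * A i j = |A i j|)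
    (hconn : ∀ i j : Fin n, Relation.ReflTransGen (fun a b => A a b ≠ 0) i j)
    (x0 : Fin n → ℝ) (x : ℝ → Fin n → ℝ)
    (hx : ∀ t, x t = NormedSpace.exp (-(t • signedLaplacian A)) *ᵥ x0)
    (β : ℝ) (hβ : β = (∑ i, σ i * x0 i) / n) :
    Filter.Tendsto x Filter.atTop (nhds (β • σ)) ∧
      ∀ i, Filter.Tendsto (fun t => |x t i|) Filter.atTop (nhds |β|) := by
  rcases Nat.eq_zero_or_pos n with hn | hn
  · subst hn
    have hxeq : x = fun _ => β • σ := funext fun t => Subsingleton.elim _ _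
    exact ⟨by rw [hxeq]; exact tendsto_const_nhds, fun i => i.elim0⟩
  have hnR : (n : ℝ) ≠ 0 := Nat.cast_ne_zero.mpr hn.ne'
  have hsq : ∀ i, σ i * σ i = 1 := fun i => by rcases hσ i with h | h <;> rw [h] <;> ring
  set L := signedLaplacian A with hLdef
  have hL : L.IsHermitian := sL_isHermitian hsym
  have hpsd : L.PosSemidef := sL_posSemidef hsym hdiag hσ hbal
  set U : Matrix (Fin n) (Fin n) ℝ := (hL.eigenvectorUnitary : Matrix (Fin n) (Fin n) ℝ) with hUdef
  set μ : Fin n → ℝ := hL.eigenvalues with hμdef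
  have hμ0 : ∀ k, 0 ≤ μ k := fun k => hpsd.eigenvalues_nonneg k
  have hspec : L = U * Matrix.diagonal μ * star U := by
    have h := hL.spectral_theorem
    simpa using h
  have hU2 : U * star U = 1 := Matrix.mem_unitaryGroup_iff.mp hL.eigenvectorUnitary.2
  have hU1 : star U * U = 1 := Matrix.mem_unitaryGroup_iff'.mp hL.eigenvectorUnitary.2
  have hUunit : IsUnit U := ⟨⟨U, star U, hU2, hU1⟩, rfl⟩
  have hUinv : U⁻¹ = star U := Matrix.inv_eq_right_inv hU2
  have hexp : ∀ t : ℝ, NormedSpace.exp (-(t • L))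
      = U * Matrix.diagonal (fun k => Real.exp (-(t * μ k))) * star U := by
    intro t
    have hd : -(t • Matrix.diagonal μ) = Matrix.diagonal (fun k => -(t * μ k)) := by
      ext i j
      by_cases h : i = j
      · subst h; simp [Matrix.diagonal_apply_eq]
      · simp [Matrix.diagonal_apply_ne _ h]
    have h1 : -(t • L) = U * Matrix.diagonal (fun k => -(t * μ k)) * U⁻¹ := by
      rw [hUinv, hspec, ← hd]
      simp only [Matrix.mul_neg, Matrix.neg_mul, Matrix.mul_smul, Matrix.smul_mul]
    rw [h1, Matrix.exp_conj U _ hUunit, Matrix.exp_diagonal, hUinv]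
    have he : NormedSpace.exp (fun k => -(t * μ k)) = fun k => Real.exp (-(t * μ k)) :=
      funext fun k => by rw [Pi.coe_exp, ← Real.exp_eq_exp_ℝ]
    rw [he]
  have hWv : ∀ (v : Fin n → ℝ) (k : Fin n), (star U *ᵥ v) k = ∑ j, U j k * v j := by
    intro v k
    simp [Matrix.mulVec, dotProduct, Matrix.conjTranspose_apply]
  have happly : ∀ (d : Fin n → ℝ) (v : Fin n → ℝ) (i : Fin n),
      ((U * Matrix.diagonal d * star U) *ᵥ v) i = ∑ k, U i k * (d k * ∑ j, U j k * v j) := by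
    intro d v i
    rw [← Matrix.mulVec_mulVec, ← Matrix.mulVec_mulVec]
    show ∑ k, U i k * ((Matrix.diagonal d *ᵥ (star U *ᵥ v)) k)
        = ∑ k, U i k * (d k * ∑ j, U j k * v j)
    refine Finset.sum_congr rfl fun k _ => ?_
    rw [Matrix.mulVec_diagonal, hWv]
  have hcolL : ∀ k, L *ᵥ (fun i => U i k) = μ k • (fun i => U i k) := by
    intro k
    have hb : (fun i => U i k) = ⇑(hL.eigenvectorBasis k) :=
      funext fun i => hL.eigenvectorUnitary_apply i k
    rw [hb]
    exact hL.mulVec_eigenvectorBasis k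
  have hLsymm : σ ᵥ* L = L *ᵥ σ := by
    nth_rewrite 1 [← hL]
    rw [Matrix.vecMul_conjTranspose]
    simp
  have hLσ : L *ᵥ σ = 0 := sL_mulVec_sigma hdiag hσ hbal
  have horth : ∀ k, μ k ≠ 0 → ∑ j, U j k * σ j = 0 := by
    intro k hk
    have h1 : (L *ᵥ (fun i => U i k)) ⬝ᵥ σ = μ k * ∑ j, U j k * σ j := by
      rw [hcolL k, smul_dotProduct]
      simp [dotProduct, smul_eq_mul]
    have h2 : (L *ᵥ (fun i => U i k)) ⬝ᵥ σ = 0 := by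
      rw [dotProduct_comm, Matrix.dotProduct_mulVec, hLsymm, hLσ,
        zero_dotProduct]
    rw [h2] at h1
    exact (mul_eq_zero.mp h1.symm).resolve_left hk
  have hker : ∀ k, μ k = 0 → ∀ (y : Fin n → ℝ), (∑ i, σ i * y i = 0) →
      ∑ j, U j k * y j = 0 := by
    intro k hk y hy
    have hv : L *ᵥ (fun i => U i k) = 0 := by rw [hcolL k, hk, zero_smul]
    have hcst := sL_kernel hsym hdiag hσ hbal hconn _ hv
    set i0 : Fin n := ⟨0, hn⟩
    set c := σ i0 * U i0 k with hc
    have hUik : ∀ i, U i k = c * σ i := by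
      intro i
      have h1 : σ i * U i k = c := hcst i i0
      linear_combination σ i * h1 - U i k * hsq i
    calc ∑ j, U j k * y j = ∑ j, c * (σ j * y j) :=
          Finset.sum_congr rfl fun j _ => by rw [hUik j]; ring
      _ = c * ∑ j, σ j * y j := by rw [Finset.mul_sum]
      _ = 0 := by rw [hy, mul_zero]
  have hxformula : ∀ (t : ℝ) (v : Fin n → ℝ), (NormedSpace.exp (-(t • L)) *ᵥ v)
      = fun i => ∑ k, U i k * (Real.exp (-(t * μ k)) * ∑ j, U j k * v j) := by
    intro t v
    rw [hexp t]
    exact funext fun i => happly _ v i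
  have hexpσ : ∀ t : ℝ, NormedSpace.exp (-(t • L)) *ᵥ σ = σ := by
    intro t
    rw [hxformula t σ]
    funext i
    have hstep : ∀ k, Real.exp (-(t * μ k)) * (∑ j, U j k * σ j) = ∑ j, U j k * σ j := by
      intro k
      by_cases hk : μ k = 0
      · rw [hk]; simp
      · rw [horth k hk, mul_zero]
    have h2 : ((U * star U) *ᵥ σ) i = ∑ k, U i k * ∑ j, U j k * σ j := by
      rw [← Matrix.mulVec_mulVec]
      show ∑ k, U i k * ((star U *ᵥ σ) k) = _
      exact Finset.sum_congr rfl fun k _ => by rw [hWv]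
    have h3 : ∑ k, U i k * (Real.exp (-(t * μ k)) * ∑ j, U j k * σ j)
        = ∑ k, U i k * ∑ j, U j k * σ j :=
      Finset.sum_congr rfl fun k _ => by rw [hstep k]
    rw [h3, ← h2, hU2, Matrix.one_mulVec]
  -- the perturbation
  set y : Fin n → ℝ := fun i => x0 i - β * σ i with hydef
  have hσσ : ∑ i, σ i * σ i = (n : ℝ) := by
    simp only [hsq]
    simp
  have hβn : ∑ i, σ i * x0 i = β * n := by rw [hβ]; field_simp
  have hy : ∑ i, σ i * y i = 0 := by
    simp only [hydef, mul_sub, Finset.sum_sub_distrib]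
    have : ∑ i, σ i * (β * σ i) = β * ∑ i, σ i * σ i := by
      rw [Finset.mul_sum]; exact Finset.sum_congr rfl fun i _ => by ring
    rw [hβn, this, hσσ]
    ring
  have hlim : ∀ i, Filter.Tendsto (fun t => x t i) Filter.atTop (nhds (β * σ i)) := by
    intro i
    have hxsplit : ∀ t, x t i
        = β * σ i + ∑ k, U i k * (Real.exp (-(t * μ k)) * ∑ j, U j k * y j) := by
      intro t
      have hx0 : x0 = (β • σ) + y := funext fun j => by
        simp only [Pi.add_apply, Pi.smul_apply, smul_eq_mul, hydef]; ring
      rw [hx t, hx0, Matrix.mulVec_add, Matrix.mulVec_smul, hexpσ t, hxformula t y]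
      simp only [Pi.add_apply, Pi.smul_apply, smul_eq_mul]
    have htail : Filter.Tendsto
        (fun t => ∑ k, U i k * (Real.exp (-(t * μ k)) * ∑ j, U j k * y j))
        Filter.atTop (nhds 0) := by
      have h0 : (0 : ℝ) = ∑ _k : Fin n, (0 : ℝ) := by simp
      rw [h0]
      refine tendsto_finset_sum _ fun k _ => ?_
      by_cases hk : μ k = 0
      · have : (fun t : ℝ => U i k * (Real.exp (-(t * μ k)) * ∑ j, U j k * y j))
            = fun _ => 0 := by
          funext t; rw [hker k hk y hy]; ring
        rw [this]; exact tendsto_const_nhds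
      · have hkpos : 0 < μ k := lt_of_le_of_ne (hμ0 k) (Ne.symm hk)
        have h1 : Filter.Tendsto (fun t : ℝ => -(t * μ k)) Filter.atTop Filter.atBot :=
          Filter.tendsto_neg_atTop_atBot.comp (Filter.tendsto_id.atTop_mul_const hkpos)
        have h2 : Filter.Tendsto (fun t : ℝ => Real.exp (-(t * μ k))) Filter.atTop (nhds 0) :=
          Real.tendsto_exp_atBot.comp h1
        have h3 := (h2.mul_const (∑ j, U j k * y j)).const_mul (U i k)
        simpa using h3
    have hconst : Filter.Tendsto (fun _ : ℝ => β * σ i) Filter.atTop (nhds (β * σ i)) :=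
      tendsto_const_nhds
    have hsum := hconst.add htail
    rw [add_zero] at hsum
    exact hsum.congr fun t => (hxsplit t).symm
  refine ⟨tendsto_pi_nhds.mpr fun i => ?_, fun i => ?_⟩
  · simpa using hlim i
  · have habs1 : |σ i| = 1 := by rcases hσ i with h | h <;> rw [h] <;> norm_num
    have := (hlim i).abs
    rw [abs_mul, habs1, mul_one] at this
    exact this
end

section
/- For structurally balanced connected L with gauge σ and M = nI − σσ^T, the function V(x) = x^T M x is nonincreasing along ẋ = −Lx, and V(x(t)) → 0 as t → ∞; moreover V(x) = 0 iff x is a scalar multiple of σ. -/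
open Finset Matrix

/-- Expansion of the `M`-quadratic form as a sum of squares. -/
lemma sum_pair_expand {n : ℕ} (σ y : Fin n → ℝ) (hσ2 : ∀ i, σ i * σ i = 1) :
    ∑ i, ∑ j, (σ j * y i - σ i * y j) ^ 2
      = 2 * ((n : ℝ) * ∑ i, (y i) ^ 2) - 2 * (∑ i, σ i * y i) ^ 2 := by
  have h1 : ∀ i j : Fin n, (σ j * y i - σ i * y j) ^ 2
      = ((y i) ^ 2 + (y j) ^ 2) - 2 * ((σ i * y i) * (σ j * y j)) := fun i j => by
    linear_combination (y i) ^ 2 * hσ2 j + (y j) ^ 2 * hσ2 i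
  have hA1 : ∑ i : Fin n, ∑ j : Fin n, ((y i) ^ 2 + (y j) ^ 2)
      = 2 * ((n : ℝ) * ∑ i, (y i) ^ 2) := by
    have h2 : ∀ i : Fin n, ∑ j : Fin n, ((y i) ^ 2 + (y j) ^ 2)
        = (n : ℝ) * (y i) ^ 2 + ∑ j, (y j) ^ 2 := fun i => by
      rw [Finset.sum_add_distrib, Finset.sum_const, Finset.card_univ, Fintype.card_fin,
        nsmul_eq_mul]
    rw [Finset.sum_congr rfl fun i _ => h2 i, Finset.sum_add_distrib, Finset.sum_const,
      Finset.card_univ, Fintype.card_fin, nsmul_eq_mul, ← Finset.mul_sum]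
    ring
  have hA2 : ∑ i : Fin n, ∑ j : Fin n, 2 * ((σ i * y i) * (σ j * y j))
      = 2 * (∑ i, σ i * y i) ^ 2 := by
    rw [sq, Finset.sum_mul_sum, Finset.mul_sum]
    exact Finset.sum_congr rfl fun i _ => by
      rw [Finset.mul_sum]
  calc ∑ i, ∑ j, (σ j * y i - σ i * y j) ^ 2
      = ∑ i : Fin n, ((∑ j : Fin n, ((y i) ^ 2 + (y j) ^ 2))
          - ∑ j : Fin n, 2 * ((σ i * y i) * (σ j * y j))) := by
        refine Finset.sum_congr rfl fun i _ => ?_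
        rw [← Finset.sum_sub_distrib]
        exact Finset.sum_congr rfl fun j _ => h1 i j
    _ = (∑ i : Fin n, ∑ j : Fin n, ((y i) ^ 2 + (y j) ^ 2))
          - ∑ i : Fin n, ∑ j : Fin n, 2 * ((σ i * y i) * (σ j * y j)) :=
        Finset.sum_sub_distrib _ _
    _ = 2 * ((n : ℝ) * ∑ i, (y i) ^ 2) - 2 * (∑ i, σ i * y i) ^ 2 := by rw [hA1, hA2]

lemma signedLaplacian_row {n : ℕ} (A : Matrix (Fin n) (Fin n) ℝ) (hdiag : ∀ i, A i i = 0)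
    (v : Fin n → ℝ) (i : Fin n) :
    (signedLaplacian A *ᵥ v) i = (∑ j, |A i j|) * v i - ∑ j, A i j * v j := by
  have hD : ∑ j ∈ Finset.univ.erase i, |A i j| = ∑ j, |A i j| :=
    Finset.sum_erase _ (by rw [hdiag i, abs_zero])
  have : (signedLaplacian A *ᵥ v) i
      = ∑ k, ((if i = k then (∑ j, |A i j|) * v k else 0) + (-(A i k * v k))) := by
    simp only [Matrix.mulVec, dotProduct, signedLaplacian, Matrix.of_apply]
    refine Finset.sum_congr rfl fun k _ => ?_
    by_cases h : i = k
    · subst h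
      rw [if_pos rfl, if_pos rfl, hD, hdiag i]
      ring
    · rw [if_neg h, if_neg h]
      ring
  rw [this, Finset.sum_add_distrib, Finset.sum_ite_eq, if_pos (Finset.mem_univ i)]
  simp only [Finset.sum_neg_distrib]
  ring

lemma signedLaplacian_quadform {n : ℕ} (A : Matrix (Fin n) (Fin n) ℝ)
    (σ : Fin n → ℝ) (hσ2 : ∀ i, σ i * σ i = 1) (hdiag : ∀ i, A i i = 0)
    (habs : ∀ i j, |A i j| = |A j i|)
    (hA : ∀ i j, A i j = σ i * σ j * |A i j|) (v : Fin n → ℝ) :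
    v ⬝ᵥ (signedLaplacian A *ᵥ v)
      = (1 / 2) * ∑ i, ∑ j, |A i j| * (σ i * v i - σ j * v j) ^ 2 := by
  have lhs : v ⬝ᵥ (signedLaplacian A *ᵥ v)
      = (∑ i, ∑ j, |A i j| * (v i) ^ 2) - ∑ i, ∑ j, A i j * (v i * v j) := by
    rw [← Finset.sum_sub_distrib]
    simp only [dotProduct]
    refine Finset.sum_congr rfl fun i _ => ?_
    rw [signedLaplacian_row A hdiag v i]
    have e1 : (∑ j, |A i j|) * (v i * v i) = ∑ j, |A i j| * (v i) ^ 2 := by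
      rw [Finset.sum_mul]
      exact Finset.sum_congr rfl fun j _ => by ring
    have e2 : v i * (∑ j, A i j * v j) = ∑ j, A i j * (v i * v j) := by
      rw [Finset.mul_sum]
      exact Finset.sum_congr rfl fun j _ => by ring
    calc v i * ((∑ j, |A i j|) * v i - ∑ j, A i j * v j)
        = (∑ j, |A i j|) * (v i * v i) - v i * (∑ j, A i j * v j) := by ring
      _ = _ := by rw [e1, e2]
  have hterm : ∀ i j, |A i j| * (σ i * v i - σ j * v j) ^ 2
      = (|A i j| * (v i) ^ 2 + |A i j| * (v j) ^ 2) - 2 * (A i j * (v i * v j)) := fun i j => by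
    linear_combination (|A i j| * (v i) ^ 2) * hσ2 i + (|A i j| * (v j) ^ 2) * hσ2 j
      + (2 * (v i * v j)) * hA i j
  have swap : ∑ i, ∑ j, |A i j| * (v j) ^ 2 = ∑ i, ∑ j, |A i j| * (v i) ^ 2 := by
    rw [Finset.sum_comm]
    exact Finset.sum_congr rfl fun j _ => Finset.sum_congr rfl fun i _ => by rw [habs]
  have rhs : ∑ i, ∑ j, |A i j| * (σ i * v i - σ j * v j) ^ 2
      = 2 * ((∑ i, ∑ j, |A i j| * (v i) ^ 2) - ∑ i, ∑ j, A i j * (v i * v j)) := by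
    calc ∑ i, ∑ j, |A i j| * (σ i * v i - σ j * v j) ^ 2
        = ∑ i, ((∑ j, (|A i j| * (v i) ^ 2 + |A i j| * (v j) ^ 2))
            - ∑ j, 2 * (A i j * (v i * v j))) := by
          refine Finset.sum_congr rfl fun i _ => ?_
          rw [← Finset.sum_sub_distrib]
          exact Finset.sum_congr rfl fun j _ => hterm i j
      _ = (∑ i, ∑ j, (|A i j| * (v i) ^ 2 + |A i j| * (v j) ^ 2))
            - ∑ i, ∑ j, 2 * (A i j * (v i * v j)) := Finset.sum_sub_distrib _ _
      _ = ((∑ i, ∑ j, |A i j| * (v i) ^ 2) + ∑ i, ∑ j, |A i j| * (v j) ^ 2)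
            - 2 * ∑ i, ∑ j, A i j * (v i * v j) := by
          rw [Finset.mul_sum]
          congr 1
          · rw [← Finset.sum_add_distrib]
            exact Finset.sum_congr rfl fun i _ => Finset.sum_add_distrib
          · exact Finset.sum_congr rfl fun i _ => (Finset.mul_sum _ _ _).symm
      _ = 2 * ((∑ i, ∑ j, |A i j| * (v i) ^ 2) - ∑ i, ∑ j, A i j * (v i * v j)) := by
          rw [swap]; ring
  rw [lhs, rhs]; ring

lemma Mform {n : ℕ} (σ y : Fin n → ℝ) :
    y ⬝ᵥ ((((n : ℝ) • (1 : Matrix (Fin n) (Fin n) ℝ) - Matrix.vecMulVec σ σ)) *ᵥ y)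
      = (n : ℝ) * (∑ i, (y i) ^ 2) - (∑ i, σ i * y i) ^ 2 := by
  have inner : ∀ i, ((((n : ℝ) • (1 : Matrix (Fin n) (Fin n) ℝ) - Matrix.vecMulVec σ σ)) *ᵥ y) i
      = (n : ℝ) * y i - σ i * ∑ j, σ j * y j := by
    intro i
    simp only [Matrix.mulVec, dotProduct, Matrix.sub_apply, Matrix.smul_apply,
      Matrix.one_apply, Matrix.vecMulVec_apply, smul_eq_mul, sub_mul, ite_mul, one_mul,
      zero_mul, mul_ite, mul_zero, mul_one]
    rw [Finset.sum_sub_distrib, Finset.sum_ite_eq, if_pos (Finset.mem_univ i), Finset.mul_sum]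
    congr 1
    exact Finset.sum_congr rfl fun j _ => by ring
  calc y ⬝ᵥ ((((n : ℝ) • (1 : Matrix (Fin n) (Fin n) ℝ) - Matrix.vecMulVec σ σ)) *ᵥ y)
      = ∑ i, y i * ((n : ℝ) * y i - σ i * ∑ j, σ j * y j) :=
        Finset.sum_congr rfl fun i _ => by rw [inner i]
    _ = ∑ i, ((n : ℝ) * (y i) ^ 2 - (σ i * y i) * ∑ j, σ j * y j) :=
        Finset.sum_congr rfl fun i _ => by ring
    _ = (n : ℝ) * (∑ i, (y i) ^ 2) - (∑ i, σ i * y i) * ∑ j, σ j * y j := by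
        rw [Finset.sum_sub_distrib, Finset.mul_sum, Finset.sum_mul]
    _ = (n : ℝ) * (∑ i, (y i) ^ 2) - (∑ i, σ i * y i) ^ 2 := by rw [sq]

/-- V(x) = xᵀMx is nonincreasing along ẋ = −Lx, tends to 0, and vanishes exactly on
the span of σ, for structurally balanced connected signed Laplacians. -/
theorem lyapunov_decrease {n : ℕ} (A : Matrix (Fin n) (Fin n) ℝ)
    (hsym : A.IsSymm) (hdiag : ∀ i, A i i = 0)
    (σ : Fin n → ℝ) (hσ : ∀ i, σ i = 1 ∨ σ i = -1)
    (hbal : ∀ i j, i ≠ j → σ i * σ j * A i j = |A i j|)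
    (hconn : ∀ i j : Fin n, Relation.ReflTransGen (fun a b => A a b ≠ 0) i j)
    (M : Matrix (Fin n) (Fin n) ℝ)
    (hM : M = (n : ℝ) • (1 : Matrix (Fin n) (Fin n) ℝ) - Matrix.vecMulVec σ σ)
    (x0 : Fin n → ℝ) (x : ℝ → Fin n → ℝ)
    (hx : ∀ t, x t = NormedSpace.exp (-(t • signedLaplacian A)) *ᵥ x0) :
    (∀ s t : ℝ, s ≤ t → x t ⬝ᵥ (M *ᵥ x t) ≤ x s ⬝ᵥ (M *ᵥ x s)) ∧
      Filter.Tendsto (fun t => x t ⬝ᵥ (M *ᵥ x t)) Filter.atTop (nhds 0) ∧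
      ∀ y : Fin n → ℝ, y ⬝ᵥ (M *ᵥ y) = 0 ↔ ∃ c : ℝ, y = c • σ := by
  classical
  have hσ2 : ∀ i, σ i * σ i = 1 := fun i => by rcases hσ i with h | h <;> rw [h] <;> norm_num
  have habs : ∀ i j : Fin n, |A i j| = |A j i| := fun i j => by
    have h : A j i = A i j := congrFun (congrFun hsym i) j
    rw [h]
  have hAfull : ∀ i j, A i j = σ i * σ j * |A i j| := by
    intro i j
    by_cases h : i = j
    · subst h; rw [hdiag i, abs_zero]; ring
    · have hb := hbal i j h
      linear_combination (σ i * σ j) * hb - (A i j * (σ j * σ j)) * hσ2 i - A i j * hσ2 j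
  set L := signedLaplacian A with hLdef
  have hQform : ∀ v : Fin n → ℝ,
      v ⬝ᵥ (L *ᵥ v) = (1 / 2) * ∑ i, ∑ j, |A i j| * (σ i * v i - σ j * v j) ^ 2 :=
    signedLaplacian_quadform A σ hσ2 hdiag habs hAfull
  have hQnonneg : ∀ v, 0 ≤ v ⬝ᵥ (L *ᵥ v) := fun v => by rw [hQform v]; positivity
  have hVform : ∀ y : Fin n → ℝ,
      y ⬝ᵥ (M *ᵥ y) = (n : ℝ) * (∑ i, (y i) ^ 2) - (∑ i, σ i * y i) ^ 2 := fun y => by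
    rw [hM]; exact Mform σ y
  have hVsq : ∀ y : Fin n → ℝ,
      y ⬝ᵥ (M *ᵥ y) = (1 / 2) * ∑ i, ∑ j, (σ j * y i - σ i * y j) ^ 2 := fun y => by
    rw [hVform y, sum_pair_expand σ y hσ2]; ring
  have hVnonneg : ∀ y, 0 ≤ y ⬝ᵥ (M *ᵥ y) := fun y => by rw [hVsq y]; positivity
  -- Part 3
  have part3 : ∀ y : Fin n → ℝ, y ⬝ᵥ (M *ᵥ y) = 0 ↔ ∃ c : ℝ, y = c • σ := by
    intro y
    constructor
    · intro h0
      have hsum : ∑ i, ∑ j, (σ j * y i - σ i * y j) ^ 2 = 0 := by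
        have h := hVsq y; rw [h0] at h; linarith
      have hterm : ∀ i j, σ j * y i - σ i * y j = 0 := by
        intro i j
        have h1 : ∀ i ∈ Finset.univ, (0 : ℝ) ≤ ∑ j, (σ j * y i - σ i * y j) ^ 2 :=
          fun i _ => by positivity
        have h2 := (Finset.sum_eq_zero_iff_of_nonneg h1).mp hsum i (Finset.mem_univ i)
        have h3 : ∀ j ∈ Finset.univ, (0 : ℝ) ≤ (σ j * y i - σ i * y j) ^ 2 :=
          fun j _ => sq_nonneg _
        have h4 := (Finset.sum_eq_zero_iff_of_nonneg h3).mp h2 j (Finset.mem_univ j)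
        exact pow_eq_zero_iff (two_ne_zero) |>.mp h4
      rcases Nat.eq_zero_or_pos n with hn | hn
      · exact ⟨0, funext fun i => Fin.elim0 (Fin.cast hn i)⟩
      · set i0 : Fin n := ⟨0, hn⟩
        refine ⟨σ i0 * y i0, funext fun j => ?_⟩
        simp only [Pi.smul_apply, smul_eq_mul]
        linear_combination (σ i0) * (hterm j i0) - y j * hσ2 i0
    · rintro ⟨c, rfl⟩
      rw [hVsq]
      have hz : ∀ i j : Fin n, (σ j * (c • σ) i - σ i * (c • σ) j) ^ 2 = 0 := fun i j => by
        have : σ j * (c • σ) i - σ i * (c • σ) j = 0 := by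
          simp only [Pi.smul_apply, smul_eq_mul]; ring
        rw [this]; ring
      rw [Finset.sum_congr rfl fun i _ => Finset.sum_congr rfl fun j _ => hz i j]
      simp
  -- σ annihilates L on the left
  have hσL : ∀ v : Fin n → ℝ, ∑ i, σ i * (L *ᵥ v) i = 0 := by
    intro v
    have e1 : ∀ i j, σ i * (A i j * v j) = |A i j| * (σ j * v j) := fun i j => by
      linear_combination (σ i * v j) * hAfull i j + (|A i j| * σ j * v j) * hσ2 i
    have swap2 : ∑ i, ∑ j, |A i j| * (σ j * v j) = ∑ i, ∑ j, |A i j| * (σ i * v i) := by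
      rw [Finset.sum_comm]
      exact Finset.sum_congr rfl fun j _ => Finset.sum_congr rfl fun i _ => by rw [habs]
    calc ∑ i, σ i * (L *ᵥ v) i
        = ∑ i, ((∑ j, |A i j| * (σ i * v i)) - ∑ j, |A i j| * (σ j * v j)) := by
          refine Finset.sum_congr rfl fun i _ => ?_
          rw [hLdef, signedLaplacian_row A hdiag v i]
          have a1 : σ i * ((∑ j, |A i j|) * v i) = ∑ j, |A i j| * (σ i * v i) := by
            rw [Finset.sum_mul, Finset.mul_sum]
            exact Finset.sum_congr rfl fun j _ => by ring
          have a2 : σ i * (∑ j, A i j * v j) = ∑ j, |A i j| * (σ j * v j) := by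
            rw [Finset.mul_sum]
            exact Finset.sum_congr rfl fun j _ => e1 i j
          calc σ i * ((∑ j, |A i j|) * v i - ∑ j, A i j * v j)
              = σ i * ((∑ j, |A i j|) * v i) - σ i * (∑ j, A i j * v j) := by ring
            _ = _ := by rw [a1, a2]
      _ = (∑ i, ∑ j, |A i j| * (σ i * v i)) - ∑ i, ∑ j, |A i j| * (σ j * v j) :=
          Finset.sum_sub_distrib _ _
      _ = 0 := by rw [swap2, sub_self]
  -- zero quadratic form implies gauge consensus
  have hQzero : ∀ v : Fin n → ℝ, v ⬝ᵥ (L *ᵥ v) = 0 → ∀ i j, σ i * v i = σ j * v j := by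
    intro v hv
    have hsum : ∑ i, ∑ j, |A i j| * (σ i * v i - σ j * v j) ^ 2 = 0 := by
      have h := hQform v; rw [hv] at h; linarith
    have hterm : ∀ a b : Fin n, A a b ≠ 0 → σ a * v a = σ b * v b := by
      intro a b hab
      have h1 : ∀ i ∈ Finset.univ, (0 : ℝ) ≤ ∑ j, |A i j| * (σ i * v i - σ j * v j) ^ 2 :=
        fun i _ => by positivity
      have h2 := (Finset.sum_eq_zero_iff_of_nonneg h1).mp hsum a (Finset.mem_univ a)
      have h3 : ∀ j ∈ Finset.univ, (0 : ℝ) ≤ |A a j| * (σ a * v a - σ j * v j) ^ 2 :=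
        fun j _ => by positivity
      have h4 := (Finset.sum_eq_zero_iff_of_nonneg h3).mp h2 b (Finset.mem_univ b)
      rcases mul_eq_zero.mp h4 with h5 | h5
      · exact absurd (abs_eq_zero.mp h5) hab
      · have := pow_eq_zero_iff (two_ne_zero) |>.mp h5
        linarith
    intro i j
    have hgen : ∀ {a b : Fin n}, Relation.ReflTransGen (fun a b => A a b ≠ 0) a b →
        σ a * v a = σ b * v b := by
      intro a b h
      induction h with
      | refl => rfl
      | tail _ hlast ih => exact ih.trans (hterm _ _ hlast)
    exact hgen (hconn i j)
  -- spectral gap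
  have hgap : ∃ μ : ℝ, 0 < μ ∧
      ∀ v : Fin n → ℝ, μ * (v ⬝ᵥ (M *ᵥ v)) ≤ (n : ℝ) * (v ⬝ᵥ (L *ᵥ v)) := by
    rcases Nat.eq_zero_or_pos n with hn | hn
    · subst hn
      refine ⟨1, one_pos, fun v => ?_⟩
      have h1 : (∑ i, σ i * v i) = 0 := by simp
      rw [hVform v, h1]
      have := hQnonneg v
      push_cast
      nlinarith [hQnonneg v]
    · have hna : (n : ℝ) ≠ 0 := Nat.cast_ne_zero.mpr (by omega)
      set S : Set (Fin n → ℝ) := {w | (∑ i, (w i) ^ 2) = 1 ∧ (∑ i, σ i * w i) = 0} with hSdef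
      have hQscale : ∀ (c : ℝ) (w : Fin n → ℝ),
          (c • w) ⬝ᵥ (L *ᵥ (c • w)) = c ^ 2 * (w ⬝ᵥ (L *ᵥ w)) := by
        intro c w
        rw [Matrix.mulVec_smul, dotProduct_smul, smul_dotProduct]
        simp only [smul_eq_mul]
        ring
      have hSmem : ∀ w : Fin n → ℝ, (∑ i, σ i * w i) = 0 → (∑ i, (w i) ^ 2) ≠ 0 →
          ((Real.sqrt (∑ i, (w i) ^ 2))⁻¹ • w) ∈ S := by
        intro w hw hwz
        have hpos : 0 < ∑ i, (w i) ^ 2 :=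
          lt_of_le_of_ne (Finset.sum_nonneg fun i _ => sq_nonneg _) (Ne.symm hwz)
        have hr : 0 < Real.sqrt (∑ i, (w i) ^ 2) := Real.sqrt_pos.mpr hpos
        have hr2 : (Real.sqrt (∑ i, (w i) ^ 2)) ^ 2 = ∑ i, (w i) ^ 2 := Real.sq_sqrt hpos.le
        constructor
        · have h1 : ∑ i, (((Real.sqrt (∑ i, (w i) ^ 2))⁻¹ • w) i) ^ 2
              = ((Real.sqrt (∑ i, (w i) ^ 2))⁻¹) ^ 2 * ∑ i, (w i) ^ 2 := by
            rw [Finset.mul_sum]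
            exact Finset.sum_congr rfl fun i _ => by
              simp only [Pi.smul_apply, smul_eq_mul]; ring
          rw [h1, inv_pow, hr2]
          field_simp
        · have h1 : ∑ i, σ i * (((Real.sqrt (∑ i, (w i) ^ 2))⁻¹ • w) i)
              = ((Real.sqrt (∑ i, (w i) ^ 2))⁻¹) * ∑ i, σ i * w i := by
            rw [Finset.mul_sum]
            exact Finset.sum_congr rfl fun i _ => by
              simp only [Pi.smul_apply, smul_eq_mul]; ring
          rw [h1, hw, mul_zero]
      have hexists : ∃ μ : ℝ, 0 < μ ∧ ∀ w : Fin n → ℝ, (∑ i, σ i * w i) = 0 →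
          μ * (∑ i, (w i) ^ 2) ≤ w ⬝ᵥ (L *ᵥ w) := by
        by_cases hS : S.Nonempty
        · have hclosed : IsClosed S := by
            have h1 : IsClosed {w : Fin n → ℝ | (∑ i, (w i) ^ 2) = 1} :=
              isClosed_eq (continuous_finset_sum _ fun i _ => (continuous_apply i).pow 2)
                continuous_const
            have h2 : IsClosed {w : Fin n → ℝ | (∑ i, σ i * w i) = 0} :=
              isClosed_eq (continuous_finset_sum _ fun i _ =>
                continuous_const.mul (continuous_apply i)) continuous_const
            exact h1.inter h2
          have hbdd : S ⊆ Metric.closedBall 0 1 := by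
            intro w hw
            rw [Metric.mem_closedBall, dist_zero_right]
            rw [pi_norm_le_iff_of_nonneg zero_le_one]
            intro i
            rw [Real.norm_eq_abs]
            have h2 : (w i) ^ 2 ≤ 1 := by
              rw [← hw.1]
              exact Finset.single_le_sum (fun j _ => sq_nonneg (w j)) (Finset.mem_univ i)
            nlinarith [abs_nonneg (w i), sq_abs (w i)]
          have hcpt : IsCompact S :=
            (isCompact_closedBall (0 : Fin n → ℝ) 1).of_isClosed_subset hclosed hbdd
          have hQcont : Continuous fun w : Fin n → ℝ => w ⬝ᵥ (L *ᵥ w) := by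
            have hfun : (fun w : Fin n → ℝ => w ⬝ᵥ (L *ᵥ w))
                = fun w => ∑ i, w i * ∑ j, L i j * w j := rfl
            rw [hfun]
            exact continuous_finset_sum _ fun i _ => (continuous_apply i).mul
              (continuous_finset_sum _ fun j _ => continuous_const.mul (continuous_apply j))
          obtain ⟨w0, hw0S, hw0min⟩ := hcpt.exists_isMinOn hS hQcont.continuousOn
          refine ⟨w0 ⬝ᵥ (L *ᵥ w0), ?_, ?_⟩
          · rcases lt_or_eq_of_le (hQnonneg w0) with h | h
            · exact h
            · exfalso
              have hcons := hQzero w0 h.symm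
              set i0 : Fin n := ⟨0, hn⟩
              have hk : ∀ i, w0 i = (σ i0 * w0 i0) * σ i := fun i => by
                linear_combination (σ i) * (hcons i0 i).symm - w0 i * hσ2 i
              have hzero : σ i0 * w0 i0 = 0 := by
                have hsum0 := hw0S.2
                have hsc : ∑ i, σ i * w0 i = (n : ℝ) * (σ i0 * w0 i0) := by
                  calc ∑ i, σ i * w0 i = ∑ _i : Fin n, (σ i0 * w0 i0) :=
                        Finset.sum_congr rfl fun i _ => by
                          rw [hk i]
                          linear_combination (σ i0 * w0 i0) * hσ2 i
                    _ = (n : ℝ) * (σ i0 * w0 i0) := by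
                        rw [Finset.sum_const, Finset.card_univ, Fintype.card_fin, nsmul_eq_mul]
                rw [hsc] at hsum0
                rcases mul_eq_zero.mp hsum0 with h5 | h5
                · exact absurd h5 hna
                · exact h5
              have hzz : ∑ i, (w0 i) ^ 2 = 0 := by
                have : ∀ i, (w0 i) ^ 2 = 0 := fun i => by rw [hk i, hzero]; ring
                rw [Finset.sum_congr rfl fun i _ => this i]
                simp
              rw [hw0S.1] at hzz
              norm_num at hzz
          · intro w hw
            by_cases hwz : ∑ i, (w i) ^ 2 = 0
            · rw [hwz, mul_zero]; exact hQnonneg w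
            · have hpos : 0 < ∑ i, (w i) ^ 2 :=
                lt_of_le_of_ne (Finset.sum_nonneg fun i _ => sq_nonneg _) (Ne.symm hwz)
              have hr : 0 < Real.sqrt (∑ i, (w i) ^ 2) := Real.sqrt_pos.mpr hpos
              have hr2 : (Real.sqrt (∑ i, (w i) ^ 2)) ^ 2 = ∑ i, (w i) ^ 2 :=
                Real.sq_sqrt hpos.le
              have hu := hSmem w hw hwz
              have hmin : w0 ⬝ᵥ (L *ᵥ w0) ≤ ((Real.sqrt (∑ i, (w i) ^ 2))⁻¹ • w) ⬝ᵥ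
                  (L *ᵥ ((Real.sqrt (∑ i, (w i) ^ 2))⁻¹ • w)) := hw0min hu
              have hQu := hQscale (Real.sqrt (∑ i, (w i) ^ 2))⁻¹ w
              rw [hQu] at hmin
              have hr2' : ((Real.sqrt (∑ i, (w i) ^ 2))⁻¹) ^ 2 = (∑ i, (w i) ^ 2)⁻¹ := by
                rw [inv_pow, hr2]
              rw [hr2'] at hmin
              calc (w0 ⬝ᵥ (L *ᵥ w0)) * (∑ i, (w i) ^ 2)
                  ≤ ((∑ i, (w i) ^ 2)⁻¹ * (w ⬝ᵥ (L *ᵥ w))) * (∑ i, (w i) ^ 2) :=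
                    mul_le_mul_of_nonneg_right hmin hpos.le
                _ = w ⬝ᵥ (L *ᵥ w) := by field_simp
        · refine ⟨1, one_pos, fun w hw => ?_⟩
          by_cases hwz : ∑ i, (w i) ^ 2 = 0
          · rw [hwz, mul_zero]; exact hQnonneg w
          · exact absurd ⟨_, hSmem w hw hwz⟩ hS
      obtain ⟨μ, hμpos, hkey⟩ := hexists
      refine ⟨μ, hμpos, fun v => ?_⟩
      set a : ℝ := (∑ i, σ i * v i) / n with hadef
      set w : Fin n → ℝ := fun i => v i - a * σ i with hwdef
      have hσσ : ∑ i, (σ i * σ i) = (n : ℝ) := by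
        rw [Finset.sum_congr rfl fun i _ => hσ2 i, Finset.sum_const, Finset.card_univ,
          Fintype.card_fin, nsmul_eq_mul, mul_one]
      have hworth : ∑ i, σ i * w i = 0 := by
        have h1 : ∀ i, σ i * w i = σ i * v i - a * (σ i * σ i) := fun i => by
          simp only [hwdef]; ring
        rw [Finset.sum_congr rfl fun i _ => h1 i, Finset.sum_sub_distrib, ← Finset.mul_sum,
          hσσ, hadef]
        field_simp
        ring
      have hQvw : v ⬝ᵥ (L *ᵥ v) = w ⬝ᵥ (L *ᵥ w) := by
        rw [hQform v, hQform w]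
        congr 1
        refine Finset.sum_congr rfl fun i _ => Finset.sum_congr rfl fun j _ => ?_
        have h1 : σ i * v i - σ j * v j = σ i * w i - σ j * w j := by
          simp only [hwdef]
          linear_combination a * hσ2 i - a * hσ2 j
        rw [h1]
      have hVvw : v ⬝ᵥ (M *ᵥ v) = (n : ℝ) * ∑ i, (w i) ^ 2 := by
        rw [hVform v]
        have h1 : ∑ i, (w i) ^ 2
            = ∑ i, ((v i) ^ 2 - 2 * a * (σ i * v i) + a ^ 2 * (σ i * σ i)) :=
          Finset.sum_congr rfl fun i _ => by simp only [hwdef]; ring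
        have h2 : ∑ i, ((v i) ^ 2 - 2 * a * (σ i * v i) + a ^ 2 * (σ i * σ i))
            = (∑ i, (v i) ^ 2) - 2 * a * (∑ i, σ i * v i) + a ^ 2 * (n : ℝ) := by
          rw [Finset.sum_add_distrib, Finset.sum_sub_distrib, ← Finset.mul_sum,
            ← Finset.mul_sum, hσσ]
        rw [h1, h2, hadef]
        field_simp
        ring
      rw [hQvw, hVvw]
      calc μ * ((n : ℝ) * ∑ i, (w i) ^ 2) = (n : ℝ) * (μ * ∑ i, (w i) ^ 2) := by ring
        _ ≤ (n : ℝ) * (w ⬝ᵥ (L *ᵥ w)) :=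
            mul_le_mul_of_nonneg_left (hkey w hworth) (Nat.cast_nonneg n)
  -- derivative of the flow
  have hxE : ∀ t : ℝ, x t = NormedSpace.exp (t • (-L)) *ᵥ x0 := by
    intro t
    rw [hx t, smul_neg]
  have hx' : ∀ (t : ℝ) (i : Fin n),
      HasDerivAt (fun s => x s i) (-(L *ᵥ x t) i) t := by
    intro t i
    letI : SeminormedRing (Matrix (Fin n) (Fin n) ℝ) := Matrix.linftyOpSemiNormedRing
    letI : NormedRing (Matrix (Fin n) (Fin n) ℝ) := Matrix.linftyOpNormedRing
    letI : NormedAlgebra ℝ (Matrix (Fin n) (Fin n) ℝ) := Matrix.linftyOpNormedAlgebra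
    have hE : HasDerivAt (fun s : ℝ => NormedSpace.exp (s • (-L)))
        ((-L) * NormedSpace.exp (t • (-L))) t := hasDerivAt_exp_smul_const' (-L) t
    have hEntry : ∀ j : Fin n, HasDerivAt (fun s => NormedSpace.exp (s • (-L)) i j)
        (((-L) * NormedSpace.exp (t • (-L))) i j) t := by
      intro j
      let e : Matrix (Fin n) (Fin n) ℝ →ₗ[ℝ] ℝ :=
        { toFun := fun m => m i j, map_add' := fun _ _ => rfl, map_smul' := fun _ _ => rfl }
      have hc := (LinearMap.toContinuousLinearMap e).hasFDerivAt
        (x := NormedSpace.exp (t • (-L)))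
      exact hc.comp_hasDerivAt t hE
    have hxs : (fun s => x s i) = fun s => ∑ j, NormedSpace.exp (s • (-L)) i j * x0 j := by
      funext s
      rw [hxE s]
      rfl
    rw [hxs]
    have hsum : HasDerivAt (fun s => ∑ j, NormedSpace.exp (s • (-L)) i j * x0 j)
        (∑ j, ((-L) * NormedSpace.exp (t • (-L))) i j * x0 j) t :=
      HasDerivAt.fun_sum fun j _ => (hEntry j).mul_const (x0 j)
    have hval : ∑ j, ((-L) * NormedSpace.exp (t • (-L))) i j * x0 j = -(L *ᵥ x t) i := by
      have hmm : ((-L) * NormedSpace.exp (t • (-L))) *ᵥ x0 = -(L *ᵥ x t) := by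
        rw [← Matrix.mulVec_mulVec, Matrix.neg_mulVec, ← hxE t]
      have := congrFun hmm i
      simpa [Matrix.mulVec, dotProduct] using this
    rw [← hval]
    exact hsum
  -- derivative of the Lyapunov function
  have hf' : ∀ t : ℝ, HasDerivAt (fun s => x s ⬝ᵥ (M *ᵥ x s))
      (-2 * (n : ℝ) * (x t ⬝ᵥ (L *ᵥ x t))) t := by
    intro t
    have hfun : (fun s => x s ⬝ᵥ (M *ᵥ x s))
        = fun s => (n : ℝ) * (∑ i, (x s i) ^ 2) - (∑ i, σ i * x s i) ^ 2 :=
      funext fun s => hVform (x s)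
    rw [hfun]
    have h1 : HasDerivAt (fun s => ∑ i, (x s i) ^ 2)
        (∑ i, 2 * x t i * (-(L *ᵥ x t) i)) t :=
      HasDerivAt.fun_sum fun i _ => by simpa using (hx' t i).fun_pow 2
    have h2 : HasDerivAt (fun s => ∑ i, σ i * x s i)
        (∑ i, σ i * (-(L *ᵥ x t) i)) t :=
      HasDerivAt.fun_sum fun i _ => (hx' t i).const_mul (σ i)
    have h3 := (h1.const_mul ((n : ℝ))).fun_sub (h2.fun_pow 2)
    have e2 : ∑ i, σ i * (-(L *ᵥ x t) i) = 0 := by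
      have h4 : ∑ i, σ i * (-(L *ᵥ x t) i) = -∑ i, σ i * (L *ᵥ x t) i := by
        rw [← Finset.sum_neg_distrib]
        exact Finset.sum_congr rfl fun i _ => by ring
      rw [h4, hσL (x t), neg_zero]
    have e1 : ∑ i, 2 * x t i * (-(L *ᵥ x t) i) = -2 * (x t ⬝ᵥ (L *ᵥ x t)) := by
      have hdp : x t ⬝ᵥ (L *ᵥ x t) = ∑ i, x t i * (L *ᵥ x t) i := rfl
      calc ∑ i, 2 * x t i * (-(L *ᵥ x t) i)
          = ∑ i, (-2) * (x t i * (L *ᵥ x t) i) := Finset.sum_congr rfl fun i _ => by ring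
        _ = (-2) * ∑ i, x t i * (L *ᵥ x t) i := (Finset.mul_sum _ _ _).symm
        _ = -2 * (x t ⬝ᵥ (L *ᵥ x t)) := by rw [hdp]
    refine HasDerivAt.congr_deriv h3 ?_
    rw [e1, e2]
    push_cast
    ring

  have hmono : ∀ s t : ℝ, s ≤ t → x t ⬝ᵥ (M *ᵥ x t) ≤ x s ⬝ᵥ (M *ᵥ x s) := by
    intro s t hst
    refine antitone_of_deriv_nonpos (fun u => (hf' u).differentiableAt) (fun u => ?_) hst
    rw [(hf' u).deriv]
    have h1 := hQnonneg (x u)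
    have h2 : (0 : ℝ) ≤ n := Nat.cast_nonneg n
    nlinarith
  refine ⟨hmono, ?_, part3⟩
  -- convergence to zero
  obtain ⟨μ, hμpos, hμ⟩ := hgap
  have hdecay : ∀ t : ℝ, 0 ≤ t →
      x t ⬝ᵥ (M *ᵥ x t) ≤ Real.exp (-(2 * μ * t)) * (x 0 ⬝ᵥ (M *ᵥ x 0)) := by
    intro t ht
    have hh' : ∀ u : ℝ, HasDerivAt (fun s => Real.exp (2 * μ * s) * (x s ⬝ᵥ (M *ᵥ x s)))
        ((2 * μ * Real.exp (2 * μ * u)) * (x u ⬝ᵥ (M *ᵥ x u))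
          + Real.exp (2 * μ * u) * (-2 * (n : ℝ) * (x u ⬝ᵥ (L *ᵥ x u)))) u := by
      intro u
      have h0 : HasDerivAt (fun s : ℝ => 2 * μ * s) (2 * μ) u := by
        simpa using (hasDerivAt_id u).const_mul (2 * μ)
      have hexp : HasDerivAt (fun s => Real.exp (2 * μ * s)) (2 * μ * Real.exp (2 * μ * u)) u := by
        have := (Real.hasDerivAt_exp (2 * μ * u)).comp u h0
        simpa [Function.comp_def, mul_comm] using this
      exact hexp.mul (hf' u)
    have hhmono : Real.exp (2 * μ * t) * (x t ⬝ᵥ (M *ᵥ x t))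
        ≤ Real.exp (2 * μ * 0) * (x 0 ⬝ᵥ (M *ᵥ x 0)) := by
      refine antitone_of_deriv_nonpos (fun u => (hh' u).differentiableAt) (fun u => ?_) ht
      rw [(hh' u).deriv]
      have hkey := hμ (x u)
      have hexppos := Real.exp_pos (2 * μ * u)
      nlinarith [hexppos, hkey]
    rw [mul_zero, Real.exp_zero, one_mul] at hhmono
    have h2 : (0 : ℝ) < Real.exp (2 * μ * t) := Real.exp_pos _
    calc x t ⬝ᵥ (M *ᵥ x t)
        = (Real.exp (2 * μ * t))⁻¹ * (Real.exp (2 * μ * t) * (x t ⬝ᵥ (M *ᵥ x t))) := by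
          field_simp
      _ ≤ (Real.exp (2 * μ * t))⁻¹ * (x 0 ⬝ᵥ (M *ᵥ x 0)) :=
          mul_le_mul_of_nonneg_left hhmono (inv_nonneg.mpr h2.le)
      _ = Real.exp (-(2 * μ * t)) * (x 0 ⬝ᵥ (M *ᵥ x 0)) := by rw [Real.exp_neg]
  have hupper : Filter.Tendsto (fun t => Real.exp (-(2 * μ * t)) * (x 0 ⬝ᵥ (M *ᵥ x 0)))
      Filter.atTop (nhds 0) := by
    have h1 : Filter.Tendsto (fun t : ℝ => 2 * μ * t) Filter.atTop Filter.atTop :=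
      Filter.Tendsto.const_mul_atTop (by positivity) Filter.tendsto_id
    have h2 : Filter.Tendsto (fun t : ℝ => Real.exp (-(2 * μ * t))) Filter.atTop (nhds 0) :=
      Real.tendsto_exp_atBot.comp (Filter.tendsto_neg_atTop_atBot.comp h1)
    simpa using h2.mul_const (x 0 ⬝ᵥ (M *ᵥ x 0))
  refine tendsto_of_tendsto_of_tendsto_of_le_of_le' tendsto_const_nhds hupper ?_ ?_
  · exact Filter.Eventually.of_forall fun t => hVnonneg (x t)
  · exact Filter.eventually_atTop.mpr ⟨0, fun t ht => hdecay t ht⟩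
end

section
/- First-order expansion of the matrix exponential: for signed Laplacians L₁, L₂ with L₁ − L₂ = |a_ij| v v^T (v = e_i − sgn(a_ij) e_j), and M = nI − σσ^T with σ in the kernels of both L₁ and L₂, the derivative at t = 0 of t ↦ x^T e^{−tL₂} M e^{−tL₂} x − x^T e^{−tL₁} M e^{−tL₁} x equals 2n |a_ij| (x_i − sgn(a_ij) x_j)². -/
open Finset Matrix

/-- Adjacency matrix with the edge (i,j) removed. -/
def removeEdge {n : ℕ} (A : Matrix (Fin n) (Fin n) ℝ) (i j : Fin n) :
    Matrix (Fin n) (Fin n) ℝ :=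
  Matrix.of fun k l => if (k = i ∧ l = j) ∨ (k = j ∧ l = i) then 0 else A k l

lemma quadDeriv {n : ℕ} (L M : Matrix (Fin n) (Fin n) ℝ) (x : Fin n → ℝ) :
    HasDerivAt
      (fun t : ℝ =>
        x ⬝ᵥ ((NormedSpace.exp (-(t • L)) * M * NormedSpace.exp (-(t • L))) *ᵥ x))
      (x ⬝ᵥ ((-(L * M) - M * L) *ᵥ x)) 0 := by
  letI : SeminormedRing (Matrix (Fin n) (Fin n) ℝ) := Matrix.linftyOpSemiNormedRing
  letI : NormedRing (Matrix (Fin n) (Fin n) ℝ) := Matrix.linftyOpNormedRing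
  letI : NormedAlgebra ℝ (Matrix (Fin n) (Fin n) ℝ) := Matrix.linftyOpNormedAlgebra
  have hE : HasDerivAt (fun t : ℝ => NormedSpace.exp (-(t • L))) (-L) 0 := by
    have h := hasDerivAt_exp_smul_const (𝕂 := ℝ) (-L) 0
    simp only [smul_neg, zero_smul, neg_zero, NormedSpace.exp_zero, one_mul] at h
    exact h
  have hEM : HasDerivAt (fun t : ℝ => NormedSpace.exp (-(t • L)) * M) (-L * M) 0 :=
    hE.mul_const M
  have hF : HasDerivAt
      (fun t : ℝ => NormedSpace.exp (-(t • L)) * M * NormedSpace.exp (-(t • L)))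
      (-(L * M) - M * L) 0 := by
    have h := hEM.mul hE
    simp only [zero_smul, neg_zero, NormedSpace.exp_zero, mul_one, one_mul] at h
    exact h.congr_deriv (by noncomm_ring)
  let φ : Matrix (Fin n) (Fin n) ℝ →ₗ[ℝ] ℝ :=
    { toFun := fun N => x ⬝ᵥ (N *ᵥ x)
      map_add' := fun N₁ N₂ => by simp [Matrix.add_mulVec, dotProduct_add]
      map_smul' := fun c N => by simp [Matrix.smul_mulVec, dotProduct_smul] }
  exact (φ.toContinuousLinearMap.hasFDerivAt
    (x := (fun t : ℝ =>
      NormedSpace.exp (-(t • L)) * M * NormedSpace.exp (-(t • L))) 0)).comp_hasDerivAt 0 hF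

lemma lap_symm {n : ℕ} (B : Matrix (Fin n) (Fin n) ℝ) (hs : B.IsSymm) :
    (signedLaplacian B).IsSymm := by
  ext k l
  by_cases h : k = l
  · simp [signedLaplacian, h, Matrix.transpose_apply]
  · simp [signedLaplacian, Matrix.transpose_apply, h, Ne.symm h, hs.apply k l]

lemma lap_mulVec_sigma {n : ℕ} (B : Matrix (Fin n) (Fin n) ℝ)
    (σ : Fin n → ℝ) (hσ : ∀ i, σ i = 1 ∨ σ i = -1)
    (hbal : ∀ k l, k ≠ l → σ k * σ l * B k l = |B k l|) :
    (signedLaplacian B) *ᵥ σ = 0 := by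
  funext k
  have hσk : σ k * σ k = 1 := by rcases hσ k with h | h <;> simp [h]
  simp only [signedLaplacian, Matrix.mulVec, dotProduct, Matrix.of_apply, Pi.zero_apply]
  rw [← Finset.sum_erase_add _ _ (Finset.mem_univ k)]
  have h1 : ∀ l ∈ Finset.univ.erase k,
      (if k = l then ∑ j ∈ Finset.univ.erase k, |B k j| else -B k l) * σ l
        = -(σ k * |B k l|) := by
    intro l hl
    have hlk : l ≠ k := (Finset.mem_erase.1 hl).1
    have : σ l * B k l = σ k * |B k l| := by
      have hb := hbal k l (Ne.symm hlk)
      calc σ l * B k l = σ k * (σ k * σ l * B k l) := by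
            rw [← mul_assoc, ← mul_assoc, hσk]; ring
        _ = σ k * |B k l| := by rw [hb]
    simp [Ne.symm hlk, neg_mul]
    linarith [this]
  rw [Finset.sum_congr rfl h1]
  simp only [Finset.sum_neg_distrib, ← Finset.mul_sum, if_pos rfl]
  simp [mul_comm]

lemma M_mul_lap {n : ℕ} (L M : Matrix (Fin n) (Fin n) ℝ) (σ : Fin n → ℝ)
    (hM : M = (n : ℝ) • (1 : Matrix (Fin n) (Fin n) ℝ) - Matrix.vecMulVec σ σ)
    (hσL : σ ᵥ* L = 0) : M * L = (n : ℝ) • L := by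
  subst hM
  rw [sub_mul, smul_mul_assoc, one_mul]
  have : Matrix.vecMulVec σ σ * L = 0 := by
    ext k l
    have h := congrFun hσL l
    simp only [Matrix.vecMul, dotProduct, Pi.zero_apply] at h
    simp only [Matrix.mul_apply, Matrix.vecMulVec_apply, Matrix.zero_apply, mul_assoc,
      ← Finset.mul_sum]
    rw [h, mul_zero]
  rw [this, sub_zero]

lemma lap_mul_M {n : ℕ} (L M : Matrix (Fin n) (Fin n) ℝ) (σ : Fin n → ℝ)
    (hM : M = (n : ℝ) • (1 : Matrix (Fin n) (Fin n) ℝ) - Matrix.vecMulVec σ σ)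
    (hLσ : L *ᵥ σ = 0) : L * M = (n : ℝ) • L := by
  subst hM
  rw [mul_sub, mul_smul_comm, mul_one]
  have : L * Matrix.vecMulVec σ σ = 0 := by
    ext k l
    have h := congrFun hLσ k
    simp only [Matrix.mulVec, dotProduct, Pi.zero_apply] at h
    simp only [Matrix.mul_apply, Matrix.vecMulVec_apply, Matrix.zero_apply, ← mul_assoc,
      ← Finset.sum_mul]
    rw [h, zero_mul]
  rw [this, sub_zero]

lemma sign_facts (a : ℝ) : Real.sign a * |a| = a ∧ |a| * (Real.sign a * Real.sign a) = |a| := by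
  rcases lt_trichotomy a 0 with h | h | h
  · simp [Real.sign_of_neg h, abs_of_neg h]
  · simp [h]
  · simp [Real.sign_of_pos h, abs_of_pos h]

lemma delta_eq {n : ℕ} (A : Matrix (Fin n) (Fin n) ℝ) (hsym : A.IsSymm)
    (i j : Fin n) (hij : i ≠ j) :
    signedLaplacian A - signedLaplacian (removeEdge A i j)
      = |A i j| • Matrix.vecMulVec
          (fun k => (if k = i then (1:ℝ) else 0) - Real.sign (A i j) * (if k = j then 1 else 0))
          (fun k => (if k = i then (1:ℝ) else 0) - Real.sign (A i j) * (if k = j then 1 else 0)) := by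
  obtain ⟨hsc, hss⟩ := sign_facts (A i j)
  have hji : A j i = A i j := hsym.apply i j
  ext k l
  simp only [Matrix.sub_apply, Matrix.smul_apply, Matrix.vecMulVec_apply, signedLaplacian,
    Matrix.of_apply, smul_eq_mul]
  by_cases hkl : k = l
  · subst hkl
    rw [if_pos rfl, if_pos rfl, ← Finset.sum_sub_distrib]
    by_cases hk : k = i
    · subst hk
      have h1 : ∀ m ∈ Finset.univ.erase k, |A k m| - |removeEdge A k j k m|
          = if m = j then |A k j| else 0 := by
        intro m hm
        by_cases hmj : m = j
        · subst hmj; simp [removeEdge]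
        · simp [removeEdge, hmj, fun h : k = j => hij h]
      rw [Finset.sum_congr rfl h1, Finset.sum_ite_eq' (Finset.univ.erase k) j]
      simp [Finset.mem_erase, Ne.symm hij, hij]
    · by_cases hk2 : k = j
      · subst hk2
        have h1 : ∀ m ∈ Finset.univ.erase k, |A k m| - |removeEdge A i k k m|
            = if m = i then |A i k| else 0 := by
          intro m hm
          by_cases hmi : m = i
          · subst hmi
            simp [removeEdge, hji]
          · simp [removeEdge, hmi, hk]
        rw [Finset.sum_congr rfl h1, Finset.sum_ite_eq' (Finset.univ.erase k) i]
        simp [Finset.mem_erase, hij, Ne.symm hij, hji]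
        ring_nf
        rw [mul_comm] at hss
        linarith [hss]
      · have h1 : ∀ m ∈ Finset.univ.erase k, |A k m| - |removeEdge A i j k m| = 0 := by
          intro m hm; simp [removeEdge, hk, hk2]
        rw [Finset.sum_congr rfl h1]
        simp [hk, hk2]
  · rw [if_neg hkl, if_neg hkl]
    by_cases h1 : k = i ∧ l = j
    · obtain ⟨hk, hl⟩ := h1
      simp [removeEdge, hk, hl, hij, Ne.symm hij]
      linarith [hsc]
    · by_cases h2 : k = j ∧ l = i
      · obtain ⟨hk, hl⟩ := h2
        simp [removeEdge, hk, hl, hij, Ne.symm hij, hji]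
        linarith [hsc]
      · have hre : removeEdge A i j k l = A k l := by simp [removeEdge, h1, h2]
        rw [hre]
        have hv : ((if k = i then (1:ℝ) else 0) - Real.sign (A i j) * (if k = j then 1 else 0))
            * ((if l = i then (1:ℝ) else 0) - Real.sign (A i j) * (if l = j then 1 else 0)) = 0 := by
          by_cases hk : k = i
          · have hlj : l ≠ j := fun h => h1 ⟨hk, h⟩
            have hli : l ≠ i := fun h => hkl (hk.trans h.symm)
            have hkj : k ≠ j := fun h => hij (hk.symm.trans h)
            simp [hk, hli, hlj, hkj]
          · by_cases hk2 : k = j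
            · have hli : l ≠ i := fun h => h2 ⟨hk2, h⟩
              have hlj : l ≠ j := fun h => hkl (hk2.trans h.symm)
              simp [hk, hk2, hli, hlj]
            · simp [hk, hk2]
        rw [hv, mul_zero]
        ring

/-- First-order expansion: the derivative at t = 0 of the cost difference between the
attacked (edge (i,j) removed) and unattacked flows equals 2n|a_ij|(x_i − sgn(a_ij)x_j)². -/
theorem cost_difference_derivative {n : ℕ} (A : Matrix (Fin n) (Fin n) ℝ)
    (hsym : A.IsSymm) (hdiag : ∀ i, A i i = 0)
    (σ : Fin n → ℝ) (hσ : ∀ i, σ i = 1 ∨ σ i = -1)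
    (hbal : ∀ i j, i ≠ j → σ i * σ j * A i j = |A i j|)
    (i j : Fin n) (hij : i ≠ j)
    (L₁ L₂ M : Matrix (Fin n) (Fin n) ℝ)
    (hL₁ : L₁ = signedLaplacian A) (hL₂ : L₂ = signedLaplacian (removeEdge A i j))
    (hM : M = (n : ℝ) • (1 : Matrix (Fin n) (Fin n) ℝ) - Matrix.vecMulVec σ σ)
    (x : Fin n → ℝ) :
    HasDerivAt
      (fun t : ℝ =>
        x ⬝ᵥ ((NormedSpace.exp (-(t • L₂)) * M * NormedSpace.exp (-(t • L₂))) *ᵥ x) -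
        x ⬝ᵥ ((NormedSpace.exp (-(t • L₁)) * M * NormedSpace.exp (-(t • L₁))) *ᵥ x))
      (2 * n * |A i j| * (x i - Real.sign (A i j) * x j) ^ 2) 0 := by
  have hsym' : (removeEdge A i j).IsSymm := by
    ext k l
    have hiff : ((l = i ∧ k = j) ∨ (l = j ∧ k = i)) ↔ ((k = i ∧ l = j) ∨ (k = j ∧ l = i)) := by
      tauto
    simp [removeEdge, Matrix.transpose_apply, hiff, hsym.apply k l]
  have hbal' : ∀ k l, k ≠ l → σ k * σ l * removeEdge A i j k l = |removeEdge A i j k l| := by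
    intro k l h
    by_cases hc : (k = i ∧ l = j) ∨ (k = j ∧ l = i)
    · simp [removeEdge, hc]
    · simpa [removeEdge, hc] using hbal k l h
  have hL1σ : L₁ *ᵥ σ = 0 := hL₁ ▸ lap_mulVec_sigma A σ hσ hbal
  have hL2σ : L₂ *ᵥ σ = 0 := hL₂ ▸ lap_mulVec_sigma _ σ hσ hbal'
  have hsymL₁ : L₁.IsSymm := hL₁ ▸ lap_symm A hsym
  have hsymL₂ : L₂.IsSymm := hL₂ ▸ lap_symm _ hsym'
  have hσL₁ : σ ᵥ* L₁ = 0 := by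
    conv_lhs => rw [← hsymL₁]
    rw [Matrix.vecMul_transpose, hL1σ]
  have hσL₂ : σ ᵥ* L₂ = 0 := by
    conv_lhs => rw [← hsymL₂]
    rw [Matrix.vecMul_transpose, hL2σ]
  have hML₁ : M * L₁ = (n : ℝ) • L₁ := M_mul_lap _ _ σ hM hσL₁
  have hLM₁ : L₁ * M = (n : ℝ) • L₁ := lap_mul_M _ _ σ hM hL1σ
  have hML₂ : M * L₂ = (n : ℝ) • L₂ := M_mul_lap _ _ σ hM hσL₂
  have hLM₂ : L₂ * M = (n : ℝ) • L₂ := lap_mul_M _ _ σ hM hL2σ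
  have h := (quadDeriv L₂ M x).sub (quadDeriv L₁ M x)
  have hDc : ∀ L : Matrix (Fin n) (Fin n) ℝ,
      -((n : ℝ) • L) - (n : ℝ) • L = (-(2 * (n : ℝ))) • L := by
    intro L; ext k l; simp; ring
  have key : x ⬝ᵥ (L₁ *ᵥ x) - x ⬝ᵥ (L₂ *ᵥ x)
      = |A i j| * (x i - Real.sign (A i j) * x j) ^ 2 := by
    have hd : x ⬝ᵥ ((L₁ - L₂) *ᵥ x) = |A i j| * (x i - Real.sign (A i j) * x j) ^ 2 := by
      rw [hL₁, hL₂, delta_eq A hsym i j hij, Matrix.smul_mulVec, dotProduct_smul]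
      set v : Fin n → ℝ :=
        fun k => (if k = i then (1:ℝ) else 0) - Real.sign (A i j) * (if k = j then 1 else 0)
        with hvdef
      have hmv : Matrix.vecMulVec v v *ᵥ x = (v ⬝ᵥ x) • v := by
        funext k
        simp only [Matrix.mulVec, Matrix.vecMulVec_apply, dotProduct, Pi.smul_apply,
          smul_eq_mul, Finset.sum_mul]
        exact Finset.sum_congr rfl fun l _ => by ring
      have hvx : v ⬝ᵥ x = x i - Real.sign (A i j) * x j := by
        simp [hvdef, dotProduct, sub_mul, Finset.sum_sub_distrib, ite_mul, one_mul, zero_mul,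
          mul_assoc, Finset.sum_ite_eq', Finset.mul_sum]
      have hxv : x ⬝ᵥ v = x i - Real.sign (A i j) * x j := by
        rw [dotProduct_comm]; exact hvx
      rw [hmv, dotProduct_smul, hxv, smul_eq_mul, smul_eq_mul, hvx]
      ring
    rw [Matrix.sub_mulVec, dotProduct_sub] at hd
    exact hd
  have heq : x ⬝ᵥ ((-(L₂ * M) - M * L₂) *ᵥ x) - x ⬝ᵥ ((-(L₁ * M) - M * L₁) *ᵥ x)
      = 2 * n * |A i j| * (x i - Real.sign (A i j) * x j) ^ 2 := by
    rw [hLM₂, hML₂, hLM₁, hML₁, hDc, hDc, Matrix.smul_mulVec, Matrix.smul_mulVec,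
      dotProduct_smul, dotProduct_smul, smul_eq_mul, smul_eq_mul]
    linear_combination (2 * (n : ℝ)) * key
  rw [heq] at h
  exact h
end
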